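/- Let ne(v) be the basic Markov neighborhood of v and let W ⊊ ne(v) be a strict subset. Then the expected log-likelihood ratio ∑_{a_{ne(v)}} p(a_{ne(v)}) · D( p(·_v | a_{ne(v)}) ; p(·_v | a_W) ) is strictly positive; equivalently, there exists at least one configuration a_{ne(v)} with p(a_{ne(v)}) > 0 such that D( p(·_v | a_{ne(v)}) ; p(·_v | a_W) ) > 0. -/

import Mathlib

open MeasureTheory

/-- Probability of the cylinder event determined by the configuration `a` on the
finite set of vertices `Δ`. -/
noncomputable def cylProb {V A : Type*} [MeasurableSpace A]
    (μ : Measure (V → A)) (Δ : Finset V) (a : V → A) : ℝ :=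
  (μ {x | ∀ w ∈ Δ, x w = a w}).toReal

/-- Conditional probability `p(a_v | a_Δ)` that `X v = av` given the configuration
`a` on the finite set `Δ` (junk value `0` if the conditioning event is null). -/
noncomputable def condProb {V A : Type*} [MeasurableSpace A]
    (μ : Measure (V → A)) (v : V) (av : A) (Δ : Finset V) (a : V → A) : ℝ :=
  (μ {x | x v = av ∧ ∀ w ∈ Δ, x w = a w}).toReal / cylProb μ Δ a

/-- `W` is a Markov neighborhood of `v`: `v ∉ W` and conditioning on any finite
superset `Δ ⊇ W` not containing `v` gives the same conditional distribution of
`X v`, over all positive-probability configurations. -/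
def IsMarkovNbhd {V A : Type*} [MeasurableSpace A]
    (μ : Measure (V → A)) (v : V) (W : Finset V) : Prop :=
  v ∉ W ∧ ∀ (Δ : Finset V), W ⊆ Δ → v ∉ Δ → ∀ (av : A) (a : V → A),
    0 < cylProb μ Δ a → condProb μ v av Δ a = condProb μ v av W a

/-!
If every positive-probability configuration `a` on `ne(v)` had
`p(·_v | a_{ne(v)}) = p(·_v | a_W)`, then for every `Δ ⊇ W` the law of total probability over
the configurations on `ne(v) \ Δ` would give `p(·_v | a_Δ) = p(·_v | a_W)`: `W` would be a Markov
neighbourhood, contradicting the minimality of `ne(v)`. So `p(a_v | b_{ne(v)}) ≠ p(a_v | b_W)` for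
some `b` and some letter `a_v`. By the same law, `p(·_v | b_W)` is the mixture of the conditionals
`p(·_v | a_{ne(v)})` over the refinements `a` of `b_W`, with weights `p(a_{ne(v)})`; by convexity
of `t ↦ t log (t / q)` the weighted sum of the terms `p log (p / q)` is nonnegative for every
letter and positive for `a_v`, so some refinement has positive divergence.

The σ-algebra on `A` is arbitrary, so the events `{X_w = a}` need not be measurable: the
conditionals need not sum to `1` over `A` (hence the letter-by-letter argument), and additivity is
recovered by replacing each cylinder with its saturation under the measurable atoms of `A`, which
has the same outer measure.
-/

open Real InformationTheory

theorem mem_measurableAtom_pi {ι : Type*} {β : ι → Type*} [∀ i, MeasurableSpace (β i)]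
    {x y : ∀ i, β i} (h : ∀ i, y i ∈ measurableAtom (x i)) : y ∈ measurableAtom x := by
  let R : (∀ i, β i) → (∀ i, β i) → Prop := fun x y => ∀ i, y i ∈ measurableAtom (x i)
  have hR_symm : ∀ x y, R x y → R y x := fun x y hxy i =>
    measurableAtom_eq_of_mem (hxy i) ▸ mem_measurableAtom_self (x i)
  let saturated : MeasurableSpace (∀ i, β i) :=
    { MeasurableSet' := fun s => ∀ x y, R x y → x ∈ s → y ∈ s
      measurableSet_empty := fun _ _ _ h => h
      measurableSet_compl := fun s hs x y hxy hx hy => hx (hs y x (hR_symm x y hxy) hy)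
      measurableSet_iUnion := fun f hf x y hxy hx => by
        obtain ⟨k, hk⟩ := Set.mem_iUnion.mp hx
        exact Set.mem_iUnion.mpr ⟨k, hf k x y hxy hk⟩ }
  have hle : MeasurableSpace.pi ≤ saturated := by
    refine iSup_le fun i => ?_
    rintro _ ⟨t, ht, rfl⟩ x y hxy hx
    exact mem_of_mem_measurableAtom (hxy i) ht hx
  simp only [measurableAtom, Set.mem_iInter]
  exact fun s hx hs => hle s hs x y h hx

section Atoms

variable {A : Type*} [MeasurableSpace A]

variable (A) in
abbrev Atoms : Type _ := Quotient (Setoid.ker (measurableAtom : A → Set A))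

def toAtom (a : A) : Atoms A := Quotient.mk _ a

theorem toAtom_eq_toAtom_iff {a b : A} : toAtom b = toAtom a ↔ b ∈ measurableAtom a :=
  Quotient.eq.trans ⟨fun h => h ▸ mem_measurableAtom_self b, measurableAtom_eq_of_mem⟩

@[simp]
theorem toAtom_out (q : Atoms A) : toAtom q.out = q := Quotient.out_eq q

theorem measurableSet_setOf_toAtom_eq [Countable A] (a : A) :
    MeasurableSet {b | toAtom b = toAtom a} := by
  simp only [toAtom_eq_toAtom_iff, Set.ofPred_mem_eq]
  exact .measurableAtom_of_countable a

noncomputable instance [Finite A] : Fintype (Atoms A) := Fintype.ofFinite _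

end Atoms

section Cylinders

variable {V A : Type*} [MeasurableSpace A]

def atomCyl (Δ : Finset V) (a : V → A) : Set (V → A) :=
  {x | ∀ w ∈ Δ, toAtom (x w) = toAtom (a w)}

theorem measurableSet_atomCyl [Countable A] (Δ : Finset V) (a : V → A) :
    MeasurableSet (atomCyl Δ a) := by
  simp only [atomCyl, Set.ofPred_forall]
  exact .biInter Δ.countable_toSet fun w _ =>
    (measurableSet_setOf_toAtom_eq (a w)).preimage (measurable_pi_apply w)

theorem atomCyl_congr {Δ : Finset V} {a a' : V → A}
    (h : ∀ w ∈ Δ, toAtom (a w) = toAtom (a' w)) : atomCyl Δ a = atomCyl Δ a' := by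
  ext x
  exact forall₂_congr fun w hw => by rw [h w hw]

theorem atomCyl_union [DecidableEq V] (Δ D : Finset V) (a : V → A) :
    atomCyl (Δ ∪ D) a = atomCyl Δ a ∩ atomCyl D a := by
  ext x
  simp only [atomCyl, Finset.mem_union, or_imp, forall_and, Set.mem_inter_iff, Set.mem_ofPred_eq]

theorem measure_setOf_eq_atomCyl (μ : Measure (V → A)) (Δ : Finset V) (a : V → A) :
    μ {x | ∀ w ∈ Δ, x w = a w} = μ (atomCyl Δ a) := by
  classical
  refine le_antisymm (measure_mono fun x hx w hw => congrArg toAtom (hx w hw)) ?_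
  obtain ⟨t, hst, ht, hμt⟩ := exists_measurable_superset μ {x | ∀ w ∈ Δ, x w = a w}
  rw [← hμt]
  -- `t` is measurable, hence saturated by `mem_measurableAtom_pi`, so it contains `atomCyl Δ a`.
  refine measure_mono fun y hy => ?_
  have hz : Δ.piecewise a y ∈ t := hst fun w hw => Δ.piecewise_eq_of_mem _ _ hw
  refine mem_of_mem_measurableAtom (mem_measurableAtom_pi fun w => ?_) ht hz
  by_cases hw : w ∈ Δ
  · rw [Δ.piecewise_eq_of_mem _ _ hw, ← toAtom_eq_toAtom_iff]
    exact hy w hw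
  · rw [Δ.piecewise_eq_of_notMem _ _ hw]
    exact mem_measurableAtom_self _

end Cylinders

section CylProb

variable {V A : Type*} [MeasurableSpace A] {μ : Measure (V → A)} {v : V} {av : A}
  {Δ : Finset V} {a : V → A}

theorem cylProb_nonneg : 0 ≤ cylProb μ Δ a := ENNReal.toReal_nonneg

theorem condProb_nonneg : 0 ≤ condProb μ v av Δ a :=
  div_nonneg ENNReal.toReal_nonneg cylProb_nonneg

theorem cylProb_eq_toReal_atomCyl : cylProb μ Δ a = (μ (atomCyl Δ a)).toReal := by
  rw [cylProb, measure_setOf_eq_atomCyl]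

theorem cylProb_congr {a' : V → A} (h : ∀ w ∈ Δ, toAtom (a w) = toAtom (a' w)) :
    cylProb μ Δ a = cylProb μ Δ a' := by
  simp only [cylProb_eq_toReal_atomCyl, atomCyl_congr h]

theorem cylProb_mono [IsFiniteMeasure μ] {Δ' : Finset V} {a' : V → A} (hΔ : Δ ⊆ Δ')
    (h : ∀ w ∈ Δ, a' w = a w) : cylProb μ Δ' a' ≤ cylProb μ Δ a :=
  ENNReal.toReal_mono (measure_ne_top _ _)
    (measure_mono fun _ hx w hw => (hx w (hΔ hw)).trans (h w hw))

theorem condProb_eq_div [DecidableEq V] (hv : v ∉ Δ) :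
    condProb μ v av Δ a = cylProb μ (insert v Δ) (Function.update a v av) / cylProb μ Δ a := by
  have hne : ∀ w ∈ Δ, w ≠ v := fun w hw hwv => hv (hwv ▸ hw)
  unfold condProb cylProb
  congr 3
  ext x
  simp +contextual [Function.update_of_ne, hne]

theorem condProb_congr {a' : V → A} (hv : v ∉ Δ)
    (h : ∀ w ∈ Δ, toAtom (a w) = toAtom (a' w)) :
    condProb μ v av Δ a = condProb μ v av Δ a' := by
  classical
  rw [condProb_eq_div hv, condProb_eq_div hv, cylProb_congr h]
  congr 1
  refine cylProb_congr fun w hw => ?_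
  rcases Finset.mem_insert.mp hw with rfl | hw
  · simp
  · simp only [Function.update_of_ne (ne_of_mem_of_not_mem hw hv), h w hw]

theorem cylProb_mul_condProb [IsFiniteMeasure μ] [DecidableEq V] (hv : v ∉ Δ) :
    cylProb μ Δ a * condProb μ v av Δ a = cylProb μ (insert v Δ) (Function.update a v av) := by
  rw [condProb_eq_div hv]
  rcases eq_or_ne (cylProb μ Δ a) 0 with h0 | hpos
  · have hle : cylProb μ (insert v Δ) (Function.update a v av) ≤ cylProb μ Δ a :=
      cylProb_mono (Finset.subset_insert v Δ) fun w hw =>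
        Function.update_of_ne (ne_of_mem_of_not_mem hw hv) _ _
    rw [h0, zero_mul]
    exact (le_antisymm (h0 ▸ hle) cylProb_nonneg).symm
  · exact mul_div_cancel₀ _ hpos

end CylProb

section Refinement

variable {V A : Type*} [MeasurableSpace A] [DecidableEq V]

noncomputable def atomFill (D : Finset V) (a : V → A) (g : D → Atoms A) : V → A :=
  fun w => if h : w ∈ D then (g ⟨w, h⟩).out else a w

variable {D : Finset V} {a : V → A} {g : D → Atoms A} {w : V}

theorem atomFill_of_notMem (hw : w ∉ D) : atomFill D a g w = a w := dif_neg hw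

theorem toAtom_atomFill_of_mem (hw : w ∈ D) : toAtom (atomFill D a g w) = g ⟨w, hw⟩ := by
  rw [atomFill, dif_pos hw, toAtom_out]

theorem atomFill_sdiff_of_mem {n Δ : Finset V} {g : ↥(n \ Δ) → Atoms A} (hw : w ∈ Δ) :
    atomFill (n \ Δ) a g w = a w :=
  atomFill_of_notMem fun hw' => (Finset.mem_sdiff.mp hw').2 hw

theorem toAtom_atomFill_toAtom (w : V) :
    toAtom (atomFill D a (fun u => toAtom (a u)) w) = toAtom (a w) := by
  by_cases hw : w ∈ D
  · exact toAtom_atomFill_of_mem hw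
  · rw [atomFill_of_notMem hw]

theorem atomFill_update {v : V} {av : A} (hv : v ∉ D) :
    atomFill D (Function.update a v av) g = Function.update (atomFill D a g) v av := by
  ext w
  by_cases hw : w ∈ D
  · rw [Function.update_of_ne (ne_of_mem_of_not_mem hw hv), atomFill, atomFill, dif_pos hw,
      dif_pos hw]
  · rw [atomFill_of_notMem hw]
    by_cases hwv : w = v
    · subst hwv; simp
    · simp [Function.update_of_ne hwv, atomFill_of_notMem hw]

theorem measure_atomCyl_eq_sum [Finite A] (μ : Measure (V → A)) {Δ : Finset V}
    (hD : Disjoint Δ D) (a : V → A) :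
    μ (atomCyl Δ a) = ∑ g : D → Atoms A, μ (atomCyl (Δ ∪ D) (atomFill D a g)) := by
  let f : (V → A) → (D → Atoms A) := fun x w => toAtom (x w)
  have hfiber : ∀ g, f ⁻¹' {g} = atomCyl D (atomFill D a g) := by
    intro g
    ext x
    simp only [f, atomCyl, Set.mem_preimage, Set.mem_singleton_iff, funext_iff, Subtype.forall]
    exact forall₂_congr fun w hw => by rw [toAtom_atomFill_of_mem hw]
  have hcyl : ∀ g, f ⁻¹' {g} ∩ atomCyl Δ a = atomCyl (Δ ∪ D) (atomFill D a g) := by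
    intro g
    have hΔ : atomCyl Δ (atomFill D a g) = atomCyl Δ a := atomCyl_congr fun w hw => by
      rw [atomFill_of_notMem (Finset.disjoint_left.mp hD hw)]
    rw [hfiber, ← hΔ, atomCyl_union, Set.inter_comm]
  calc μ (atomCyl Δ a)
      = μ.restrict (atomCyl Δ a) (f ⁻¹' ↑(Finset.univ : Finset (D → Atoms A))) := by simp
    _ = ∑ g, μ.restrict (atomCyl Δ a) (f ⁻¹' {g}) :=
        (sum_measure_preimage_singleton _ fun g _ => hfiber g ▸ measurableSet_atomCyl _ _).symm
    _ = ∑ g : D → Atoms A, μ (atomCyl (Δ ∪ D) (atomFill D a g)) := by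
        simp only [Measure.restrict_apply (hfiber _ ▸ measurableSet_atomCyl _ _), hcyl]

end Refinement

section TotalProbability

variable {V A : Type*} [MeasurableSpace A] [DecidableEq V] [Finite A] {μ : Measure (V → A)}
  [IsFiniteMeasure μ] {Δ n : Finset V}

theorem cylProb_eq_sum (hΔ : Δ ⊆ n) (a : V → A) :
    cylProb μ Δ a = ∑ g : ↥(n \ Δ) → Atoms A, cylProb μ n (atomFill (n \ Δ) a g) := by
  simp only [cylProb_eq_toReal_atomCyl]
  rw [measure_atomCyl_eq_sum μ Finset.disjoint_sdiff, Finset.union_sdiff_of_subset hΔ,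
    ENNReal.toReal_sum fun _ _ => measure_ne_top _ _]

theorem cylProb_mul_condProb_eq_sum {v : V} (hΔ : Δ ⊆ n) (hv : v ∉ n) (av : A) (a : V → A) :
    cylProb μ Δ a * condProb μ v av Δ a = ∑ g : ↥(n \ Δ) → Atoms A,
      cylProb μ n (atomFill (n \ Δ) a g) * condProb μ v av n (atomFill (n \ Δ) a g) := by
  have hvD : v ∉ n \ Δ := fun h => hv (Finset.mem_sdiff.mp h).1
  have hD : Disjoint (insert v Δ) (n \ Δ) :=
    Finset.disjoint_insert_left.mpr ⟨hvD, Finset.disjoint_sdiff⟩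
  rw [cylProb_mul_condProb fun h => hv (hΔ h), cylProb_eq_toReal_atomCyl,
    measure_atomCyl_eq_sum μ hD, Finset.insert_union, Finset.union_sdiff_of_subset hΔ,
    ENNReal.toReal_sum fun _ _ => measure_ne_top _ _]
  refine Finset.sum_congr rfl fun g _ => ?_
  rw [cylProb_mul_condProb hv, atomFill_update hvD, cylProb_eq_toReal_atomCyl]

end TotalProbability

section Gibbs

theorem sub_le_mul_log_div {p q : ℝ} (hp : 0 ≤ p) (hq : 0 < q) : p - q ≤ p * log (p / q) := by
  have h := mul_nonneg hq.le (klFun_nonneg (div_nonneg hp hq.le))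
  rw [klFun_apply] at h
  field_simp at h
  linarith

theorem sub_lt_mul_log_div {p q : ℝ} (hp : 0 ≤ p) (hq : 0 < q) (hpq : p ≠ q) :
    p - q < p * log (p / q) := by
  have hpq' : 0 ≤ p / q := div_nonneg hp hq.le
  have hkl : 0 < klFun (p / q) := (klFun_nonneg hpq').lt_of_ne' fun h =>
    hpq ((div_eq_one_iff_eq hq.ne').mp ((klFun_eq_zero_iff hpq').mp h))
  have h := mul_pos hq hkl
  rw [klFun_apply] at h
  field_simp at h
  linarith

variable {ι : Type*} [Fintype ι] {w p : ι → ℝ} {q : ℝ}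

theorem sum_mul_sub_eq_zero_of_mixture (hmix : ∑ i, w i * p i = (∑ i, w i) * q) :
    ∑ i, w i * (p i - q) = 0 := by
  simp only [mul_sub, Finset.sum_sub_distrib, ← Finset.sum_mul, hmix, sub_self]

theorem sum_mul_mul_log_div_nonneg (hw : ∀ i, 0 ≤ w i) (hp : ∀ i, 0 ≤ p i)
    (hmix : ∑ i, w i * p i = (∑ i, w i) * q) : 0 ≤ ∑ i, w i * (p i * log (p i / q)) := by
  have hwp : ∀ i ∈ Finset.univ, 0 ≤ w i * p i := fun i _ => mul_nonneg (hw i) (hp i)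
  obtain h0 | hpos := (Finset.sum_nonneg hwp).eq_or_lt
  · refine (Finset.sum_eq_zero fun i hi => ?_).ge
    rw [← mul_assoc, (Finset.sum_eq_zero_iff_of_nonneg hwp).mp h0.symm i hi, zero_mul]
  have hq : 0 < q := pos_of_mul_pos_right (hmix ▸ hpos) (Finset.sum_nonneg fun i _ => hw i)
  calc 0 = ∑ i, w i * (p i - q) := (sum_mul_sub_eq_zero_of_mixture hmix).symm
    _ ≤ _ := Finset.sum_le_sum fun i _ =>
      mul_le_mul_of_nonneg_left (sub_le_mul_log_div (hp i) hq) (hw i)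

theorem sum_mul_mul_log_div_pos (hw : ∀ i, 0 ≤ w i) (hp : ∀ i, 0 ≤ p i)
    (hmix : ∑ i, w i * p i = (∑ i, w i) * q) {i₀ : ι} (hi₀ : 0 < w i₀) (hne : p i₀ ≠ q) :
    0 < ∑ i, w i * (p i * log (p i / q)) := by
  have hwp : ∀ i ∈ Finset.univ, 0 ≤ w i * p i := fun i _ => mul_nonneg (hw i) (hp i)
  have hW : 0 < ∑ i, w i :=
    hi₀.trans_le (Finset.single_le_sum (fun i _ => hw i) (Finset.mem_univ i₀))
  have hq : 0 < q := by
    refine (nonneg_of_mul_nonneg_right (hmix ▸ Finset.sum_nonneg hwp) hW).lt_of_ne' fun hq0 => ?_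
    have hzero := (Finset.sum_eq_zero_iff_of_nonneg hwp).mp (by rw [hmix, hq0, mul_zero])
    exact hne (hq0 ▸ (mul_eq_zero.mp (hzero i₀ (Finset.mem_univ _))).resolve_left hi₀.ne')
  calc 0 = ∑ i, w i * (p i - q) := (sum_mul_sub_eq_zero_of_mixture hmix).symm
    _ < _ := Finset.sum_lt_sum
      (fun i _ => mul_le_mul_of_nonneg_left (sub_le_mul_log_div (hp i) hq) (hw i))
      ⟨i₀, Finset.mem_univ _, mul_lt_mul_of_pos_left (sub_lt_mul_log_div (hp i₀) hq hne) hi₀⟩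

theorem exists_pos_sum_mul_log_div_of_mixture {α : Type*} [Fintype α] {w : ι → ℝ}
    {p : ι → α → ℝ} {q : α → ℝ} (hw : ∀ i, 0 ≤ w i) (hp : ∀ i x, 0 ≤ p i x)
    (hmix : ∀ x, ∑ i, w i * p i x = (∑ i, w i) * q x) {i₀ : ι} {x₀ : α} (hi₀ : 0 < w i₀)
    (hne : p i₀ x₀ ≠ q x₀) : ∃ i, 0 < w i ∧ 0 < ∑ x, p i x * log (p i x / q x) := by
  have hpos : 0 < ∑ i, w i * ∑ x, p i x * log (p i x / q x) := by
    simp only [Finset.mul_sum]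
    rw [Finset.sum_comm]
    exact Finset.sum_pos' (fun x _ => sum_mul_mul_log_div_nonneg hw (hp · x) (hmix x))
      ⟨x₀, Finset.mem_univ _, sum_mul_mul_log_div_pos hw (hp · x₀) (hmix x₀) hi₀ hne⟩
  obtain ⟨i, -, hi⟩ := Finset.exists_lt_of_sum_lt (f := fun _ => (0 : ℝ)) (by simpa using hpos)
  have hwi : 0 < w i := (hw i).lt_of_ne' fun h => by simp [h] at hi
  exact ⟨i, hwi, pos_of_mul_pos_right hi (hw i)⟩

end Gibbs

section MarkovNbhd

variable {V A : Type*} [MeasurableSpace A] {μ : Measure (V → A)} [IsFiniteMeasure μ]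
  {v : V} {n W : Finset V}

theorem IsMarkovNbhd.of_condProb_eq [Finite A] (hn : IsMarkovNbhd μ v n) (hWn : W ⊆ n)
    (h : ∀ a : V → A, 0 < cylProb μ n a → ∀ av, condProb μ v av n a = condProb μ v av W a) :
    IsMarkovNbhd μ v W := by
  classical
  have hvW : v ∉ W := fun hv => hn.1 (hWn hv)
  refine ⟨hvW, fun Δ hWΔ hvΔ av a ha => ?_⟩
  have hvU : v ∉ Δ ∪ n := by simp [hvΔ, hn.1]
  set c := atomFill ((Δ ∪ n) \ Δ) a
  have hterm : ∀ g, cylProb μ (Δ ∪ n) (c g) * condProb μ v av (Δ ∪ n) (c g) =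
      cylProb μ (Δ ∪ n) (c g) * condProb μ v av W a := by
    intro g
    obtain h0 | hpos := (cylProb_nonneg : 0 ≤ cylProb μ (Δ ∪ n) (c g)).eq_or_lt
    · rw [← h0, zero_mul, zero_mul]
    congr 1
    calc condProb μ v av (Δ ∪ n) (c g) = condProb μ v av n (c g) :=
          hn.2 _ Finset.subset_union_right hvU av _ hpos
      _ = condProb μ v av W (c g) :=
          h _ (hpos.trans_le (cylProb_mono Finset.subset_union_right fun _ _ => rfl)) av
      _ = condProb μ v av W a := condProb_congr hvW fun w hw =>
          congrArg toAtom (atomFill_sdiff_of_mem (hWΔ hw))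
  have htotal := cylProb_mul_condProb_eq_sum (μ := μ) Finset.subset_union_left hvU av a
  rw [Finset.sum_congr rfl fun g _ => hterm g, ← Finset.sum_mul,
    ← cylProb_eq_sum Finset.subset_union_left] at htotal
  exact mul_left_cancel₀ ha.ne' htotal

theorem exists_pos_divergence_of_condProb_ne [Fintype A] (hvn : v ∉ n) (hWn : W ⊆ n) {b : V → A}
    (hb : 0 < cylProb μ n b) {av₀ : A} (hne : condProb μ v av₀ n b ≠ condProb μ v av₀ W b) :
    ∃ a : V → A, 0 < cylProb μ n a ∧
      0 < ∑ av : A, condProb μ v av n a * log (condProb μ v av n a / condProb μ v av W a) := by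
  classical
  have hvW : v ∉ W := fun hv => hvn (hWn hv)
  set c := atomFill (n \ W) b
  have hcW : ∀ g av, condProb μ v av W (c g) = condProb μ v av W b := fun g av =>
    condProb_congr hvW fun w hw => congrArg toAtom (atomFill_sdiff_of_mem hw)
  have hc₀ : ∀ w, toAtom (c (fun u => toAtom (b u)) w) = toAtom (b w) := toAtom_atomFill_toAtom
  obtain ⟨g, hg, hkl⟩ := exists_pos_sum_mul_log_div_of_mixture
    (w := fun g => cylProb μ n (c g)) (p := fun g av => condProb μ v av n (c g))
    (q := fun av => condProb μ v av W b) (fun _ => cylProb_nonneg) (fun _ _ => condProb_nonneg)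
    (fun av => by rw [← cylProb_mul_condProb_eq_sum hWn hvn, ← cylProb_eq_sum hWn])
    (i₀ := fun u => toAtom (b u)) (x₀ := av₀)
    (by rwa [cylProb_congr fun w _ => hc₀ w]) (by rwa [condProb_congr hvn fun w _ => hc₀ w])
  exact ⟨c g, hg, by simpa only [hcW] using hkl⟩

end MarkovNbhd

theorem kl_positive_of_strict_subset_general {V A : Type*}
    [MeasurableSpace A] [Fintype A]
    (μ : Measure (V → A)) [IsProbabilityMeasure μ]
    (v : V) (nev : Finset V)
    (hnev : IsMarkovNbhd μ v nev)
    (hmin : ∀ W' : Finset V, IsMarkovNbhd μ v W' → nev ⊆ W')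
    (W : Finset V) (hW : W ⊂ nev) :
    ∃ a : V → A, 0 < cylProb μ nev a ∧
      0 < ∑ av : A, condProb μ v av nev a *
        Real.log (condProb μ v av nev a / condProb μ v av W a) := by
  by_cases hmatch : ∀ a : V → A, 0 < cylProb μ nev a →
      ∀ av, condProb μ v av nev a = condProb μ v av W a
  · exact absurd (hmin W (hnev.of_condProb_eq hW.subset hmatch)) hW.not_subset
  push Not at hmatch
  obtain ⟨b, hb, av₀, hne⟩ := hmatch
  exact exists_pos_divergence_of_condProb_ne hnev.1 hW.subset hb hne

/-- If `ne v` is the basic (smallest) Markov neighborhood of `v` and `W ⊊ ne v`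
is a strict subset, then there exists a positive-probability configuration
`a` on `ne v` for which the Kullback–Leibler divergence between the conditional
distributions `p(·_v | a_{ne(v)})` and `p(·_v | a_W)` is strictly positive
(equivalently, the expected log-likelihood ratio
`∑_{a} p(a_{ne(v)}) D(p(·_v|a_{ne(v)}); p(·_v|a_W))` is strictly positive). -/
theorem kl_positive_of_strict_subset {V A : Type*} [Countable V] [DecidableEq V]
    [MeasurableSpace A] [Fintype A]
    (μ : Measure (V → A)) [IsProbabilityMeasure μ]
    (hinter : ∀ (v : V) (W₁ W₂ : Finset V), IsMarkovNbhd μ v W₁ → IsMarkovNbhd μ v W₂ →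
      IsMarkovNbhd μ v (W₁ ∩ W₂))
    (v : V) (nev : Finset V)
    (hnev : IsMarkovNbhd μ v nev)
    (hmin : ∀ W' : Finset V, IsMarkovNbhd μ v W' → nev ⊆ W')
    (W : Finset V) (hW : W ⊂ nev) :
    ∃ a : V → A, 0 < cylProb μ nev a ∧
      0 < ∑ av : A, condProb μ v av nev a *
        Real.log (condProb μ v av nev a / condProb μ v av W a) :=
  kl_positive_of_strict_subset_general μ v nev hnev hmin W hW
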